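/- Let F₀, F₁ : U → ℝ^k be feature maps on the grid U = ZMod Q × ZMod M such that F̂₁(ω)*F̂₀(ω) ≠ 0 for every ω ∈ U, and let G : U → ℝ^k be the (real-valued) channelwise inverse discrete Fourier transform of Ĝ(ω) = F̂₁(ω) · (F̂₁(ω)*F̂₀(ω)) / |F̂₁(ω)*F̂₀(ω)|. Then G has the same second-order statistics as F₁: the Gram matrices agree, (1/|U|) Σ_{p∈U} G(p,i)·G(p,j) = (1/|U|) Σ_{p∈U} F₁(p,i)·F₁(p,j) for all channels i, j, and the correlations agree, (1/|U|) Σ_{p'∈U} G(p',n)·G(p+p',n) = (1/|U|) Σ_{p'∈U} F₁(p',n)·F₁(p+p',n) for every offset p ∈ U and channel n. (This is the ρ = 1 boundary condition of Proposition 2.) -/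

import Mathlib

open Finset Complex

/-- The discrete Fourier transform of `g : ZMod Q × ZMod M → ℂ`. -/
noncomputable def dft (Q M : ℕ) [NeZero Q] [NeZero M]
    (g : ZMod Q × ZMod M → ℂ) (ω : ZMod Q × ZMod M) : ℂ :=
  ∑ p : ZMod Q × ZMod M, g p *
    Complex.exp (-(2 * Real.pi * Complex.I) *
      (((ω.1.val * p.1.val : ℕ) : ℂ) / (Q : ℂ) + ((ω.2.val * p.2.val : ℕ) : ℂ) / (M : ℂ)))

/-- The channelwise DFT of a real feature map `F : U → ℝ^k`. -/
noncomputable def cdft (Q M : ℕ) [NeZero Q] [NeZero M] {k : ℕ}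
    (F : ZMod Q × ZMod M → Fin k → ℝ) (ω : ZMod Q × ZMod M) (n : Fin k) : ℂ :=
  dft Q M (fun p => ((F p n : ℝ) : ℂ)) ω

/-- The inverse discrete Fourier transform of `h : ZMod Q × ZMod M → ℂ`. -/
noncomputable def idft (Q M : ℕ) [NeZero Q] [NeZero M]
    (h : ZMod Q × ZMod M → ℂ) (p : ZMod Q × ZMod M) : ℂ :=
  (∑ ω : ZMod Q × ZMod M, h ω *
    Complex.exp ((2 * Real.pi * Complex.I) *
      (((ω.1.val * p.1.val : ℕ) : ℂ) / (Q : ℂ) + ((ω.2.val * p.2.val : ℕ) : ℂ) / (M : ℂ)))) /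
    ((Q * M : ℕ) : ℂ)

/-- Hermitian inner product `a*b = Σ_n conj(a_n)·b_n` on `ℂ^k`. -/
noncomputable def cinner {k : ℕ} (a b : Fin k → ℂ) : ℂ :=
  ∑ n : Fin k, (starRingEnd ℂ) (a n) * b n

/-- The optimal-transport mixed spectrum
`Ĝ(ω) = F̂₁(ω)·(F̂₁(ω)*F̂₀(ω))/|F̂₁(ω)*F̂₀(ω)|`. -/
noncomputable def Ghat (Q M : ℕ) [NeZero Q] [NeZero M] {k : ℕ}
    (F₀ F₁ : ZMod Q × ZMod M → Fin k → ℝ) (ω : ZMod Q × ZMod M) (n : Fin k) : ℂ :=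
  cdft Q M F₁ ω n * cinner (cdft Q M F₁ ω) (cdft Q M F₀ ω) /
    ((‖cinner (cdft Q M F₁ ω) (cdft Q M F₀ ω)‖ : ℝ) : ℂ)

/-!
Write `s(ω) = F̂₁(ω)*F̂₀(ω)`. Since the DFT inverts the inverse DFT, the spectrum of `G` in channel
`n` is `Ĝ(ω,n) = u(ω)·F̂₁(ω,n)` with the unimodular phase `u = s/|s|`. By Parseval and the shift
rule, the cross-correlation `Σ_p g(p₀+p)·conj(h(p))` of two signals is the inverse DFT of
`ĝ·conj(ĥ)`, and a common unimodular phase cancels in `ĝ·conj(ĥ)`. The Gram matrix is the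
cross-correlation at offset `0`, the correlation `S` the autocorrelation of one channel.
-/

open ComplexConjugate

noncomputable def gridChar (Q M : ℕ) [NeZero Q] [NeZero M] (ω p : ZMod Q × ZMod M) : ℂ :=
  ZMod.stdAddChar (ω.1 * p.1) * ZMod.stdAddChar (ω.2 * p.2)

section Fourier

variable {Q M : ℕ} [NeZero Q] [NeZero M]

lemma exp_eq_gridChar (ω p : ZMod Q × ZMod M) :
    Complex.exp ((2 * Real.pi * Complex.I) *
      (((ω.1.val * p.1.val : ℕ) : ℂ) / (Q : ℂ) + ((ω.2.val * p.2.val : ℕ) : ℂ) / (M : ℂ))) =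
      gridChar Q M ω p := by
  have hQ : ω.1 * p.1 = ((ω.1.val * p.1.val : ℕ) : ZMod Q) := by
    push_cast [ZMod.natCast_zmod_val]; rfl
  have hM : ω.2 * p.2 = ((ω.2.val * p.2.val : ℕ) : ZMod M) := by
    push_cast [ZMod.natCast_zmod_val]; rfl
  rw [gridChar, hQ, hM, ZMod.stdAddChar_apply, ZMod.stdAddChar_apply, ZMod.toCircle_natCast,
    ZMod.toCircle_natCast, mul_add, Complex.exp_add, mul_div_assoc, mul_div_assoc]

lemma gridChar_comm (ω p : ZMod Q × ZMod M) : gridChar Q M ω p = gridChar Q M p ω := by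
  simp only [gridChar, mul_comm]

lemma gridChar_add_right (ω p p' : ZMod Q × ZMod M) :
    gridChar Q M ω (p + p') = gridChar Q M ω p * gridChar Q M ω p' := by
  simp only [gridChar, Prod.fst_add, Prod.snd_add, mul_add, AddChar.map_add_eq_mul]
  ring

lemma gridChar_neg_right (ω p : ZMod Q × ZMod M) :
    gridChar Q M ω (-p) = conj (gridChar Q M ω p) := by
  simp only [gridChar, Prod.fst_neg, Prod.snd_neg, mul_neg, AddChar.map_neg_eq_conj, map_mul]

lemma gridChar_mul_conj (ω p : ZMod Q × ZMod M) :
    gridChar Q M ω p * conj (gridChar Q M ω p) = 1 := by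
  rw [← gridChar_neg_right, ← gridChar_add_right, add_neg_cancel]
  simp [gridChar]

lemma inv_gridChar (ω p : ZMod Q × ZMod M) :
    (gridChar Q M ω p)⁻¹ = conj (gridChar Q M ω p) :=
  inv_eq_of_mul_eq_one_right (gridChar_mul_conj ω p)

lemma sum_gridChar (p : ZMod Q × ZMod M) :
    ∑ ω, gridChar Q M ω p = if p = 0 then ((Q * M : ℕ) : ℂ) else 0 := by
  rw [Fintype.sum_prod_type]
  simp only [gridChar, ← Finset.mul_sum, ← Finset.sum_mul,
    AddChar.sum_mulShift _ (ZMod.isPrimitive_stdAddChar _), ZMod.card, Prod.ext_iff]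
  by_cases h₁ : p.1 = 0 <;> by_cases h₂ : p.2 = 0 <;> simp [h₁, h₂]

lemma sum_gridChar_mul_conj (a b : ZMod Q × ZMod M) :
    ∑ ω, gridChar Q M ω a * conj (gridChar Q M ω b) =
      if a = b then ((Q * M : ℕ) : ℂ) else 0 := by
  simp only [← gridChar_neg_right, ← gridChar_add_right, sum_gridChar, add_neg_eq_zero]

lemma dft_eq_sum_conj_gridChar (g : ZMod Q × ZMod M → ℂ) (ω : ZMod Q × ZMod M) :
    dft Q M g ω = ∑ p, g p * conj (gridChar Q M ω p) := by
  simp only [dft, neg_mul, Complex.exp_neg, exp_eq_gridChar, inv_gridChar]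

lemma idft_eq_sum_gridChar (h : ZMod Q × ZMod M → ℂ) (p : ZMod Q × ZMod M) :
    idft Q M h p = (∑ ω, h ω * gridChar Q M ω p) / ((Q * M : ℕ) : ℂ) := by
  simp only [idft, exp_eq_gridChar]

lemma natCast_mul_ne_zero : ((Q * M : ℕ) : ℂ) ≠ 0 :=
  Nat.cast_ne_zero.2 (Nat.mul_ne_zero (NeZero.ne Q) (NeZero.ne M))

theorem dft_idft (h : ZMod Q × ZMod M → ℂ) : dft Q M (idft Q M h) = h := by
  ext ω
  have orth : ∀ ω', ∑ p, gridChar Q M ω' p * conj (gridChar Q M ω p) =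
      if ω' = ω then ((Q * M : ℕ) : ℂ) else 0 := by
    intro ω'
    rw [← sum_gridChar_mul_conj]
    exact Finset.sum_congr rfl fun p _ => by rw [gridChar_comm ω', gridChar_comm ω]
  calc dft Q M (idft Q M h) ω
      = (∑ ω', h ω' * ∑ p, gridChar Q M ω' p * conj (gridChar Q M ω p)) / ((Q * M : ℕ) : ℂ) := by
        simp only [dft_eq_sum_conj_gridChar, idft_eq_sum_gridChar, div_mul_eq_mul_div,
          ← Finset.sum_div, Finset.sum_mul, Finset.mul_sum, mul_assoc]
        rw [Finset.sum_comm]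
    _ = h ω := by
        simp only [orth, mul_ite, mul_zero, Finset.sum_ite_eq', Finset.mem_univ, if_true]
        exact mul_div_cancel_right₀ _ natCast_mul_ne_zero

theorem sum_mul_conj_eq_sum_dft_mul_conj (f g : ZMod Q × ZMod M → ℂ) :
    ∑ p, f p * conj (g p) =
      (∑ ω, dft Q M f ω * conj (dft Q M g ω)) / ((Q * M : ℕ) : ℂ) := by
  rw [eq_div_iff natCast_mul_ne_zero]
  symm
  calc ∑ ω, dft Q M f ω * conj (dft Q M g ω)
      = ∑ ω, ∑ a, ∑ b, f a * conj (g b) * (gridChar Q M ω b * conj (gridChar Q M ω a)) := by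
        refine Finset.sum_congr rfl fun ω _ => ?_
        rw [dft_eq_sum_conj_gridChar, dft_eq_sum_conj_gridChar, map_sum, Finset.sum_mul_sum]
        refine Finset.sum_congr rfl fun a _ => Finset.sum_congr rfl fun b _ => ?_
        rw [map_mul, Complex.conj_conj]
        ring
    _ = ∑ a, ∑ b, f a * conj (g b) * ∑ ω, gridChar Q M ω b * conj (gridChar Q M ω a) := by
        simp only [Finset.mul_sum]
        rw [Finset.sum_comm]
        exact Finset.sum_congr rfl fun a _ => Finset.sum_comm
    _ = (∑ p, f p * conj (g p)) * ((Q * M : ℕ) : ℂ) := by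
        simp only [sum_gridChar_mul_conj, mul_ite, mul_zero, Finset.sum_ite_eq', Finset.mem_univ,
          if_true, Finset.sum_mul]

theorem dft_comp_add_left (f : ZMod Q × ZMod M → ℂ) (p₀ ω : ZMod Q × ZMod M) :
    dft Q M (fun p => f (p₀ + p)) ω = gridChar Q M ω p₀ * dft Q M f ω := by
  simp only [dft_eq_sum_conj_gridChar, Finset.mul_sum]
  refine Fintype.sum_equiv (Equiv.addLeft p₀) _ _ fun p => ?_
  simp only [Equiv.coe_addLeft, gridChar_add_right, map_mul]
  linear_combination -f (p₀ + p) * conj (gridChar Q M ω p) * gridChar_mul_conj ω p₀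

theorem sum_comp_add_mul_conj_eq_sum_dft (f g : ZMod Q × ZMod M → ℂ) (p₀ : ZMod Q × ZMod M) :
    ∑ p, f (p₀ + p) * conj (g p) =
      (∑ ω, gridChar Q M ω p₀ * (dft Q M f ω * conj (dft Q M g ω))) / ((Q * M : ℕ) : ℂ) := by
  simp only [sum_mul_conj_eq_sum_dft_mul_conj (fun p => f (p₀ + p)), dft_comp_add_left, mul_assoc]

theorem sum_comp_add_mul_conj_eq_of_dft_eq_mul (f₁ f₂ g₁ g₂ u : ZMod Q × ZMod M → ℂ)
    (hu : ∀ ω, ‖u ω‖ = 1) (hg₁ : ∀ ω, dft Q M g₁ ω = u ω * dft Q M f₁ ω)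
    (hg₂ : ∀ ω, dft Q M g₂ ω = u ω * dft Q M f₂ ω) (p₀ : ZMod Q × ZMod M) :
    ∑ p, g₁ (p₀ + p) * conj (g₂ p) = ∑ p, f₁ (p₀ + p) * conj (f₂ p) := by
  simp only [sum_comp_add_mul_conj_eq_sum_dft, hg₁, hg₂, map_mul]
  congr 1
  refine Finset.sum_congr rfl fun ω _ => ?_
  have hu' : u ω * conj (u ω) = 1 := by
    rw [Complex.mul_conj', hu, Complex.ofReal_one, one_pow]
  linear_combination gridChar Q M ω p₀ * dft Q M f₁ ω * conj (dft Q M f₂ ω) * hu'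

theorem sum_comp_add_mul_eq_of_dft_eq_mul (f₁ f₂ g₁ g₂ : ZMod Q × ZMod M → ℝ)
    (u : ZMod Q × ZMod M → ℂ) (hu : ∀ ω, ‖u ω‖ = 1)
    (hg₁ : ∀ ω, dft Q M (fun p => (g₁ p : ℂ)) ω = u ω * dft Q M (fun p => (f₁ p : ℂ)) ω)
    (hg₂ : ∀ ω, dft Q M (fun p => (g₂ p : ℂ)) ω = u ω * dft Q M (fun p => (f₂ p : ℂ)) ω)
    (p₀ : ZMod Q × ZMod M) :
    ∑ p, g₁ (p₀ + p) * g₂ p = ∑ p, f₁ (p₀ + p) * f₂ p := by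
  have h := sum_comp_add_mul_conj_eq_of_dft_eq_mul _ _ _ _ u hu hg₁ hg₂ p₀
  simp only [Complex.conj_ofReal] at h
  exact_mod_cast h

end Fourier

lemma norm_div_ofReal_norm {z : ℂ} (hz : z ≠ 0) : ‖z / (‖z‖ : ℂ)‖ = 1 := by
  rw [norm_div, Complex.norm_real, norm_norm, div_self (norm_ne_zero_iff.2 hz)]

/-- The `ρ = 1` boundary case of Proposition 2: the real inverse DFT `G` of the
mixed spectrum `Ĝ` has the same Gram matrix and the same correlation as `F₁`. -/
theorem idft_Ghat_same_second_order_stats (Q M : ℕ) [NeZero Q] [NeZero M] {k : ℕ}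
    (F₀ F₁ : ZMod Q × ZMod M → Fin k → ℝ)
    (h : ∀ ω : ZMod Q × ZMod M, cinner (cdft Q M F₁ ω) (cdft Q M F₀ ω) ≠ 0)
    (G : ZMod Q × ZMod M → Fin k → ℝ)
    (hG : ∀ (p : ZMod Q × ZMod M) (n : Fin k),
      ((G p n : ℝ) : ℂ) = idft Q M (fun ω => Ghat Q M F₀ F₁ ω n) p) :
    (∀ i j : Fin k,
      (∑ p : ZMod Q × ZMod M, G p i * G p j) / ((Q * M : ℕ) : ℝ) =
        (∑ p : ZMod Q × ZMod M, F₁ p i * F₁ p j) / ((Q * M : ℕ) : ℝ)) ∧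
    (∀ (p : ZMod Q × ZMod M) (n : Fin k),
      (∑ p' : ZMod Q × ZMod M, G p' n * G (p + p') n) / ((Q * M : ℕ) : ℝ) =
        (∑ p' : ZMod Q × ZMod M, F₁ p' n * F₁ (p + p') n) / ((Q * M : ℕ) : ℝ)) := by
  set s := fun ω => cinner (cdft Q M F₁ ω) (cdft Q M F₀ ω)
  have hdftG : ∀ n ω, dft Q M (fun p => (G p n : ℂ)) ω =
      s ω / (‖s ω‖ : ℂ) * cdft Q M F₁ ω n := by
    intro n ω
    rw [funext fun p => hG p n, dft_idft, Ghat]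
    ring
  have hcorr : ∀ i j p₀, ∑ p, G (p₀ + p) i * G p j = ∑ p, F₁ (p₀ + p) i * F₁ p j :=
    fun i j => sum_comp_add_mul_eq_of_dft_eq_mul (F₁ · i) (F₁ · j) (G · i) (G · j) _
      (fun ω => norm_div_ofReal_norm (h ω)) (hdftG i) (hdftG j)
  refine ⟨fun i j => ?_, fun p n => ?_⟩
  · simpa only [zero_add] using congrArg (· / ((Q * M : ℕ) : ℝ)) (hcorr i j 0)
  · simpa only [mul_comm] using congrArg (· / ((Q * M : ℕ) : ℝ)) (hcorr n n p)
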